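/- (Proposition 2.4) For a port-numbered graph and an integer t ≥ 0: if the number of equivalence classes of Π_t equals the number of equivalence classes of Π_{t+1}, then Π_t = Π, i.e., for all vertices u,v, V^t(u)=V^t(v) implies V(u)=V(v). -/
import Mathlib


/-- A port-numbered graph on vertex type `V`: a finite connected simple graph in which,
at every vertex `v` of degree `deg v`, the incident edges are labeled by distinct port
numbers `0, …, deg v - 1`.  `next v i = some (u, j)` means that the edge with port
number `i` at `v` leads to the vertex `u`, at which it has port number `j`. -/
structure PortGraph (V : Type*) [Fintype V] where
  /-- the degree of each vertex -/
  deg : V → ℕ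
  /-- `next v i = some (u, j)` iff the edge with port `i` at `v` has `u` as its other
  endpoint, where it carries port number `j` -/
  next : V → ℕ → Option (V × ℕ)
  /-- exactly the ports `0, …, deg v - 1` are present at `v` -/
  next_isSome : ∀ v i, (next v i).isSome ↔ i < deg v
  /-- the port labeling is consistent at the two endpoints of every edge -/
  next_symm : ∀ v i u j, next v i = some (u, j) → next u j = some (v, i)
  /-- no self-loops -/
  next_ne : ∀ v i u j, next v i = some (u, j) → u ≠ v
  /-- no multiple edges: distinct ports at `v` lead to distinct neighbors -/
  next_inj : ∀ v i i' u j j', next v i = some (u, j) → next v i' = some (u, j') → i = i'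
  /-- the graph is connected -/
  connected : ∀ u v : V, Relation.ReflTransGen (fun a b => ∃ i j, next a i = some (b, j)) u v

namespace PortGraph

variable {V : Type*} [Fintype V]

/-- `P.viewEq t u v` means that the views of `u` and `v` truncated at depth `t` are equal:
`V^t(u) = V^t(v)`. -/
def viewEq (P : PortGraph V) : ℕ → V → V → Prop
  | 0, u, v => P.deg u = P.deg v
  | t + 1, u, v =>
      P.deg u = P.deg v ∧
        ∀ (i j j' : ℕ) (u' v' : V),
          P.next u i = some (u', j) → P.next v i = some (v', j') →
          j = j' ∧ viewEq P t u' v'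

/-- `P.ViewEq u v` means that the (infinite) views of `u` and `v` are equal:
`V(u) = V(v)`, i.e. `V^t(u) = V^t(v)` for every `t`. -/
def ViewEq (P : PortGraph V) (u v : V) : Prop := ∀ t, P.viewEq t u v

end PortGraph

namespace PortGraph

/-- The number of equivalence classes of the partition `Π_t` of the vertex set into
classes of the relation `V^t(u) = V^t(v)`. -/
noncomputable def numClasses {V : Type*} [Fintype V] (P : PortGraph V) (t : ℕ) : ℕ :=
  Set.ncard (Set.range fun u : V => {v : V | P.viewEq t u v})

end PortGraph

namespace PortGraph

variable {V : Type*} [Fintype V] (P : PortGraph V)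

lemma viewEq_refl : ∀ (t : ℕ) (u : V), P.viewEq t u u
  | 0, u => rfl
  | t + 1, u => ⟨rfl, fun i j j' u' v' h h' => by
      rw [h, Option.some.injEq, Prod.mk.injEq] at h'
      obtain ⟨rfl, rfl⟩ := h'
      exact ⟨rfl, viewEq_refl t u'⟩⟩

lemma viewEq_symm : ∀ (t : ℕ) {u v : V}, P.viewEq t u v → P.viewEq t v u
  | 0, u, v, h => h.symm
  | t + 1, u, v, h => ⟨h.1.symm, fun i j j' v' u' hv hu =>
      ⟨(h.2 i j' j u' v' hu hv).1.symm, viewEq_symm t (h.2 i j' j u' v' hu hv).2⟩⟩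

lemma viewEq_trans : ∀ (t : ℕ) {u v w : V}, P.viewEq t u v → P.viewEq t v w → P.viewEq t u w
  | 0, u, v, w, h1, h2 => h1.trans h2
  | t + 1, u, v, w, h1, h2 => ⟨h1.1.trans h2.1, fun i j j' u' w' hu hw => by
      have hi : i < P.deg v := by
        rw [← h1.1, ← P.next_isSome, hu]; rfl
      obtain ⟨⟨v', jv⟩, hv⟩ := Option.isSome_iff_exists.mp ((P.next_isSome v i).mpr hi)
      obtain ⟨hj1, hview1⟩ := h1.2 i j jv u' v' hu hv
      obtain ⟨hj2, hview2⟩ := h2.2 i jv j' v' w' hv hw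
      exact ⟨hj1.trans hj2, viewEq_trans t hview1 hview2⟩⟩

lemma viewEq_of_succ : ∀ (t : ℕ) {u v : V}, P.viewEq (t + 1) u v → P.viewEq t u v
  | 0, u, v, h => h.1
  | t + 1, u, v, h => ⟨h.1, fun i j j' u' v' hu hv =>
      ⟨(h.2 i j j' u' v' hu hv).1, viewEq_of_succ t (h.2 i j j' u' v' hu hv).2⟩⟩

lemma viewEq_mono {m n : ℕ} (h : m ≤ n) {u v : V} (hv : P.viewEq n u v) :
    P.viewEq m u v := by
  induction h with
  | refl => exact hv
  | step _ ih => exact ih (P.viewEq_of_succ _ hv)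

lemma class_eq {t : ℕ} {u v : V} (h : P.viewEq t u v) :
    {w : V | P.viewEq t u w} = {w : V | P.viewEq t v w} := by
  ext w
  exact ⟨fun hw => P.viewEq_trans t (P.viewEq_symm t h) hw,
         fun hw => P.viewEq_trans t h hw⟩

lemma viewEq_of_class_eq {t : ℕ} {u v : V}
    (h : {w : V | P.viewEq t u w} = {w : V | P.viewEq t v w}) : P.viewEq t u v := by
  have hv : v ∈ {w : V | P.viewEq t u w} := by rw [h]; exact P.viewEq_refl t v
  exact hv

lemma step_of_numClasses_eq {t : ℕ} (h : P.numClasses t = P.numClasses (t + 1)) :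
    ∀ u v : V, P.viewEq t u v → P.viewEq (t + 1) u v := by
  classical
  set F : V → Set V := fun u => {w | P.viewEq t u w} with hF
  set G : V → Set V := fun u => {w | P.viewEq (t + 1) u w} with hG
  have hGF : ∀ u v : V, G u = G v → F u = F v := fun u v huv =>
    P.class_eq (P.viewEq_of_succ t (P.viewEq_of_class_eq huv))
  -- the induced map from classes of Π_{t+1} to classes of Π_t
  let φ : Set.range G → Set.range F := fun x => ⟨F x.2.choose, Set.mem_range_self _⟩
  have hφ : ∀ u : V, (φ ⟨G u, Set.mem_range_self u⟩ : Set V) = F u := by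
    intro u
    exact hGF _ u (Set.mem_range_self u : G u ∈ Set.range G).choose_spec
  have hsurj : Function.Surjective φ := by
    rintro ⟨_, u, rfl⟩
    exact ⟨⟨G u, Set.mem_range_self u⟩, Subtype.ext (hφ u)⟩
  have hfin1 : Fintype (Set.range G) := Fintype.ofFinite _
  have hfin2 : Fintype (Set.range F) := Fintype.ofFinite _
  have hcard : Fintype.card (Set.range G) = Fintype.card (Set.range F) := by
    have h1 : P.numClasses t = Fintype.card (Set.range F) := by
      rw [PortGraph.numClasses, ← Nat.card_coe_set_eq, Nat.card_eq_fintype_card]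
    have h2 : P.numClasses (t + 1) = Fintype.card (Set.range G) := by
      rw [PortGraph.numClasses, ← Nat.card_coe_set_eq, Nat.card_eq_fintype_card]
    omega
  have hinj : Function.Injective φ :=
    ((Fintype.bijective_iff_surjective_and_card φ).mpr ⟨hsurj, hcard⟩).1
  intro u v huv
  have : φ ⟨G u, Set.mem_range_self u⟩ = φ ⟨G v, Set.mem_range_self v⟩ := by
    apply Subtype.ext
    rw [hφ u, hφ v]
    exact P.class_eq huv
  have hGuv : G u = G v := congrArg Subtype.val (hinj this)
  exact P.viewEq_of_class_eq hGuv

end PortGraph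

/-- (Proposition 2.4) If the number of equivalence classes of `Π_t` equals the number of
equivalence classes of `Π_{t+1}`, then `Π_t = Π`: for all vertices `u, v`,
`V^t(u) = V^t(v)` implies `V(u) = V(v)`. -/
theorem viewEq_stabilizes_of_numClasses_eq {V : Type*} [Fintype V] (P : PortGraph V)
    (t : ℕ) (h : P.numClasses t = P.numClasses (t + 1)) :
    ∀ u v : V, P.viewEq t u v → P.ViewEq u v := by
  intro u v huv
  have hstep := P.step_of_numClasses_eq h
  -- the step hypothesis propagates to all deeper levels
  have prop : ∀ k : ℕ, ∀ u v : V, P.viewEq (t + k) u v → P.viewEq (t + k + 1) u v := by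
    intro k
    induction k with
    | zero => exact hstep
    | succ k ih =>
      intro u v huv
      exact ⟨huv.1, fun i j j' u' v' hu hv =>
        ⟨(huv.2 i j j' u' v' hu hv).1, ih _ _ (huv.2 i j j' u' v' hu hv).2⟩⟩
  have fwd : ∀ k : ℕ, P.viewEq (t + k) u v := by
    intro k
    induction k with
    | zero => exact huv
    | succ k ih => exact prop k u v ih
  intro s
  rcases le_or_gt s t with hs | hs
  · exact P.viewEq_mono hs huv
  · have := fwd (s - t)
    rwa [Nat.add_sub_cancel' hs.le] at this
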